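/- Let α, β > 0, 1 ≤ i ≤ n, τ ≥ 0 with iβτ + iβ − τ > 0, and let f^{(i)}_{α,β} be the density of the i-th order statistic of a sample of size n from the log-logistic distribution with parameters α, β. Then ξ^{(i)}_τ(α) := ∫₀^∞ (∂ log f^{(i)}_{α,β}(x)/∂α) · f^{(i)}_{α,β}(x)^{τ+1} dx = (β/α)^{τ+1} c(i,n)^{τ+1} · B( ((n−i+1)βτ + (n−i+1)β + τ)/β , (iβτ + iβ − τ)/β ) · (−τ/(β + τβ)). -/

import Mathlib

open MeasureTheory Set

/-- The Beta function `B(a,b) = ∫₀¹ x^(a-1) (1-x)^(b-1) dx`. -/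
noncomputable def Beta (a b : ℝ) : ℝ := ∫ x in Ioo (0:ℝ) 1, x ^ (a-1) * (1-x) ^ (b-1)

/-- `c(i,n) = n! / ((n-i)! (i-1)!)`. -/
noncomputable def cCoef (i n : ℕ) : ℝ :=
  (Nat.factorial n : ℝ) / ((Nat.factorial (n - i) : ℝ) * (Nat.factorial (i - 1) : ℝ))

/-- The density of the `i`-th order statistic of a log-logistic sample of size `n`. -/
noncomputable def fOrd (α β : ℝ) (n i : ℕ) (y : ℝ) : ℝ :=
  cCoef i n * β * (y/α) ^ ((i : ℝ) * β - 1) / (α * (1 + (y/α) ^ β) ^ (n + 1))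

/-- The score of the `i`-th order statistic density with respect to `α`. -/
noncomputable def scoreAlpha (α β : ℝ) (n i : ℕ) (x : ℝ) : ℝ :=
  β * ((n : ℝ) - i + 1) / α - ((n : ℝ) + 1) * β * α ^ (β - 1) / (α ^ β + x ^ β)

/-! Substitute `x = α (u / (1 - u)) ^ (1 / β)`, the quantile function of the log-logistic law.
Then the score becomes `(β / α) ((n + 1) u - i)` and `f^{(i)}(x) ^ (τ + 1) dx` becomes
`(c β / α) ^ (τ + 1) u ^ (a - 1) (1 - u) ^ (b - 1) du` with `a + b = (n + 1) (τ + 1)`, so the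
integral is `(c β / α) ^ (τ + 1) ((n + 1) B(a + 1, b) - i B(a, b))`, and
`B(a + 1, b) = a / (a + b) B(a, b)` reduces it to a multiple of `B(a, b)`. -/

lemma ofReal_Beta (a b : ℝ) : (Beta a b : ℂ) = Complex.betaIntegral a b := by
  rw [Complex.betaIntegral, Beta, ← integral_Ioc_eq_integral_Ioo,
    ← intervalIntegral.integral_of_le zero_le_one, ← intervalIntegral.integral_ofReal]
  refine intervalIntegral.integral_congr fun x hx => ?_
  rw [uIcc_of_le zero_le_one] at hx
  simp only [Complex.ofReal_mul, Complex.ofReal_cpow hx.1, Complex.ofReal_cpow (sub_nonneg.2 hx.2),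
    Complex.ofReal_sub, Complex.ofReal_one]

lemma Beta_comm (a b : ℝ) : Beta b a = Beta a b := by
  exact_mod_cast
    (ofReal_Beta b a).trans ((Complex.betaIntegral_symm _ _).trans (ofReal_Beta a b).symm)

lemma Beta_eq_Gamma_mul_Gamma_div {a b : ℝ} (ha : 0 < a) (hb : 0 < b) :
    Beta a b = Real.Gamma a * Real.Gamma b / Real.Gamma (a + b) := by
  rw [← ProbabilityTheory.beta, ProbabilityTheory.beta_eq_betaIntegralReal a b ha hb,
    ← ofReal_Beta, Complex.ofReal_re]

lemma Beta_add_one_left {a b : ℝ} (ha : 0 < a) (hb : 0 < b) :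
    Beta (a + 1) b = a / (a + b) * Beta a b := by
  have hab : 0 < a + b := add_pos ha hb
  rw [Beta_eq_Gamma_mul_Gamma_div (by linarith) hb, Beta_eq_Gamma_mul_Gamma_div ha hb,
    Real.Gamma_add_one ha.ne', add_right_comm, Real.Gamma_add_one hab.ne']
  have := (Real.Gamma_pos_of_pos hab).ne'
  field_simp

lemma integrableOn_Beta_integrand {a b : ℝ} (ha : 0 < a) (hb : 0 < b) :
    IntegrableOn (fun x : ℝ => x ^ (a - 1) * (1 - x) ^ (b - 1)) (Ioo 0 1) := by
  have h := Complex.betaIntegral_convergent (u := a) (v := b) (by simpa using ha) (by simpa using hb)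
  rw [intervalIntegrable_iff_integrableOn_Ioo_of_le zero_le_one] at h
  refine IntegrableOn.congr_fun (Integrable.re h) (fun x hx => ?_) measurableSet_Ioo
  simp only [← Complex.ofReal_one, ← Complex.ofReal_sub, ← Complex.ofReal_cpow hx.1.le,
    ← Complex.ofReal_cpow (sub_nonneg.2 hx.2.le), ← Complex.ofReal_mul, RCLike.re_to_complex,
    Complex.ofReal_re]

lemma integral_Ioo_linear_mul_Beta_integrand {a b : ℝ} (ha : 0 < a) (hb : 0 < b) (p q : ℝ) :
    ∫ x in Ioo (0 : ℝ) 1, (p * x - q) * (x ^ (a - 1) * (1 - x) ^ (b - 1))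
      = (p * (a / (a + b)) - q) * Beta a b := by
  have h₁ : ∀ x ∈ Ioo (0 : ℝ) 1, x * (x ^ (a - 1) * (1 - x) ^ (b - 1))
      = x ^ (a + 1 - 1) * (1 - x) ^ (b - 1) := fun x hx => by
    rw [add_sub_right_comm, Real.rpow_add_one hx.1.ne']; ring
  have h₂ := (integrableOn_Beta_integrand (a := a + 1) (by linarith) hb).congr_fun
    (fun x hx => (h₁ x hx).symm) measurableSet_Ioo
  simp_rw [sub_mul, mul_assoc]
  rw [integral_sub (h₂.const_mul p) ((integrableOn_Beta_integrand ha hb).const_mul q),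
    integral_const_mul, integral_const_mul, setIntegral_congr_fun measurableSet_Ioo h₁,
    ← Beta, ← Beta, Beta_add_one_left ha hb]

noncomputable def logLogisticQuantile (α β u : ℝ) : ℝ := α * (u / (1 - u)) ^ β⁻¹

section Quantile

variable {α β : ℝ}

lemma strictMonoOn_logLogisticQuantile (hα : 0 < α) (hβ : 0 < β) :
    StrictMonoOn (logLogisticQuantile α β) (Ioo 0 1) := by
  intro u hu w hw huw
  have hodds : u / (1 - u) < w / (1 - w) := by
    rw [div_lt_div_iff₀ (by linarith [hu.2]) (by linarith [hw.2])]
    nlinarith [hu.1, hw.2]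
  exact mul_lt_mul_of_pos_left
    (Real.rpow_lt_rpow (div_pos hu.1 (by linarith [hu.2])).le hodds (inv_pos.2 hβ)) hα

lemma logLogisticQuantile_image_Ioo (hα : 0 < α) (hβ : 0 < β) :
    logLogisticQuantile α β '' Ioo 0 1 = Ioi 0 := by
  ext y
  constructor
  · rintro ⟨u, hu, rfl⟩
    exact mul_pos hα (Real.rpow_pos_of_pos (div_pos hu.1 (by linarith [hu.2])) _)
  · intro hy
    -- `t / (1 + t)` is the log-logistic distribution function at `y`
    set t := (y / α) ^ β
    have ht : 0 < t := Real.rpow_pos_of_pos (div_pos hy hα) β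
    refine ⟨t / (1 + t), ⟨by positivity, (div_lt_one (by linarith)).2 (by linarith)⟩, ?_⟩
    have hodds : t / (1 + t) / (1 - t / (1 + t)) = t := by field_simp; ring
    rw [logLogisticQuantile, hodds, ← Real.rpow_mul (div_pos hy hα).le, mul_inv_cancel₀ hβ.ne',
      Real.rpow_one]
    field_simp

lemma hasDerivAt_logLogisticQuantile (hβ : β ≠ 0) {u : ℝ} (hu : u ∈ Ioo (0 : ℝ) 1) :
    HasDerivAt (logLogisticQuantile α β)
      (α / β * (u ^ (β⁻¹ - 1) * (1 - u) ^ (-β⁻¹ - 1))) u := by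
  have hv : 0 < 1 - u := by linarith [hu.2]
  have hodds : HasDerivAt (fun w : ℝ => w / (1 - w)) (((1 - u) ^ 2)⁻¹) u := by
    refine ((hasDerivAt_id' u).div ((hasDerivAt_id' u).const_sub 1) hv.ne').congr_deriv ?_
    ring
  refine (((Real.hasDerivAt_rpow_const (p := β⁻¹) (Or.inl (div_pos hu.1 hv).ne')).comp u
    hodds).const_mul α).congr_deriv ?_
  simp only [Real.div_rpow hu.1.le hv.le, Real.rpow_sub hu.1, Real.rpow_sub hv,
    Real.rpow_neg hv.le, Real.rpow_one]
  field_simp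

lemma div_logLogisticQuantile_rpow (hα : α ≠ 0) {u : ℝ} (hu : u ∈ Ioo (0 : ℝ) 1) (s : ℝ) :
    (logLogisticQuantile α β u / α) ^ s = (u / (1 - u)) ^ (β⁻¹ * s) := by
  rw [logLogisticQuantile, mul_div_cancel_left₀ _ hα,
    ← Real.rpow_mul (div_pos hu.1 (by linarith [hu.2])).le]

end Quantile

lemma cCoef_nonneg (i n : ℕ) : 0 ≤ cCoef i n := by
  unfold cCoef; positivity

section OrderStatistic

variable {α β : ℝ} {n i : ℕ} {u : ℝ}

lemma scoreAlpha_logLogisticQuantile (hα : 0 < α) (hβ : β ≠ 0) (hu : u ∈ Ioo (0 : ℝ) 1) :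
    scoreAlpha α β n i (logLogisticQuantile α β u) = β / α * (((n : ℝ) + 1) * u - i) := by
  have hv : 0 < 1 - u := by linarith [hu.2]
  have hQ : logLogisticQuantile α β u ^ β = α ^ β * (u / (1 - u)) := by
    rw [logLogisticQuantile, Real.mul_rpow hα.le (Real.rpow_nonneg (div_pos hu.1 hv).le _),
      ← Real.rpow_mul (div_pos hu.1 hv).le, inv_mul_cancel₀ hβ, Real.rpow_one]
  have hαβ : 0 < α ^ β := Real.rpow_pos_of_pos hα β
  rw [scoreAlpha, hQ, Real.rpow_sub_one hα.ne']
  field_simp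
  ring

lemma fOrd_logLogisticQuantile (hα : α ≠ 0) (hβ : β ≠ 0) (hu : u ∈ Ioo (0 : ℝ) 1) :
    fOrd α β n i (logLogisticQuantile α β u)
      = cCoef i n * β / α * (u ^ ((i : ℝ) - β⁻¹) * (1 - u) ^ ((n : ℝ) + 1 - i + β⁻¹)) := by
  have hv : 0 < 1 - u := by linarith [hu.2]
  have hexp : β⁻¹ * ((i : ℝ) * β - 1) = i - β⁻¹ := by field_simp
  have hodds : 1 + u / (1 - u) = (1 - u)⁻¹ := by field_simp; ring
  have hpow : (1 - u) ^ ((n : ℝ) + 1 - i + β⁻¹) = (1 - u) ^ (n + 1) / (1 - u) ^ ((i : ℝ) - β⁻¹) := by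
    rw [← Real.rpow_natCast, ← Real.rpow_sub hv]
    push_cast
    ring_nf
  rw [fOrd, div_logLogisticQuantile_rpow hα hu, div_logLogisticQuantile_rpow hα hu,
    inv_mul_cancel₀ hβ, Real.rpow_one, hexp, hodds, hpow, Real.div_rpow hu.1.le hv.le]
  have := Real.rpow_pos_of_pos hv ((i : ℝ) - β⁻¹)
  rw [inv_pow]
  field_simp

lemma logLogisticQuantile_deriv_mul_score_mul_fOrd_rpow (hα : 0 < α) (hβ : 0 < β) (τ : ℝ)
    (hu : u ∈ Ioo (0 : ℝ) 1) :
    α / β * (u ^ (β⁻¹ - 1) * (1 - u) ^ (-β⁻¹ - 1)) *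
        (scoreAlpha α β n i (logLogisticQuantile α β u) *
          fOrd α β n i (logLogisticQuantile α β u) ^ (τ + 1))
      = (cCoef i n * β / α) ^ (τ + 1) * (((n : ℝ) + 1) * u - i) *
          (u ^ (((i : ℝ) * β * τ + i * β - τ) / β - 1) *
            (1 - u) ^ ((((n : ℝ) - i + 1) * β * τ + ((n : ℝ) - i + 1) * β + τ) / β - 1)) := by
  have hv : 0 < 1 - u := by linarith [hu.2]
  have hu' : u ^ (β⁻¹ - 1) * u ^ (((i : ℝ) - β⁻¹) * (τ + 1))
      = u ^ (((i : ℝ) * β * τ + i * β - τ) / β - 1) := by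
    rw [← Real.rpow_add hu.1]
    congr 1
    field_simp
    ring
  have hv' : (1 - u) ^ (-β⁻¹ - 1) * (1 - u) ^ (((n : ℝ) + 1 - i + β⁻¹) * (τ + 1))
      = (1 - u) ^ ((((n : ℝ) - i + 1) * β * τ + ((n : ℝ) - i + 1) * β + τ) / β - 1) := by
    rw [← Real.rpow_add hv]
    congr 1
    field_simp
    ring
  rw [scoreAlpha_logLogisticQuantile hα hβ.ne' hu, fOrd_logLogisticQuantile hα.ne' hβ.ne' hu,
    Real.mul_rpow (div_nonneg (mul_nonneg (cCoef_nonneg i n) hβ.le) hα.le)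
      (mul_nonneg (Real.rpow_nonneg hu.1.le _) (Real.rpow_nonneg hv.le _)),
    Real.mul_rpow (Real.rpow_nonneg hu.1.le _) (Real.rpow_nonneg hv.le _),
    ← Real.rpow_mul hu.1.le, ← Real.rpow_mul hv.le, ← hu', ← hv']
  field_simp

end OrderStatistic

theorem xi_tau_alpha_general (α β τ : ℝ) (hα : 0 < α) (hβ : 0 < β) (hτ : 0 ≤ τ)
    (n i : ℕ) (hin : i ≤ n)
    (hpos : 0 < (i : ℝ) * β * τ + i * β - τ) :
    (∫ x in Ioi (0:ℝ), scoreAlpha α β n i x * (fOrd α β n i x) ^ (τ + 1))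
      = (β/α) ^ (τ + 1) * cCoef i n ^ (τ + 1) *
          Beta ((((n : ℝ) - i + 1) * β * τ + ((n : ℝ) - i + 1) * β + τ) / β)
               (((i : ℝ) * β * τ + i * β - τ) / β)
          * (-τ / (β + τ * β)) := by
  set a := ((i : ℝ) * β * τ + i * β - τ) / β
  set b := (((n : ℝ) - i + 1) * β * τ + ((n : ℝ) - i + 1) * β + τ) / β
  have hni : (0 : ℝ) < (n : ℝ) - i + 1 := by
    have : (i : ℝ) ≤ n := Nat.cast_le.mpr hin
    linarith
  have ha : 0 < a := div_pos hpos hβ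
  have hb : 0 < b := div_pos (by positivity) hβ
  have hmean : ((n : ℝ) + 1) * (a / (a + b)) - i = -τ / (β + τ * β) := by
    have : a + b = ((n : ℝ) + 1) * (τ + 1) := by simp only [a, b]; field_simp; ring
    rw [this]
    simp only [a]
    field_simp
    ring
  calc (∫ x in Ioi (0:ℝ), scoreAlpha α β n i x * (fOrd α β n i x) ^ (τ + 1))
      = ∫ u in Ioo (0:ℝ) 1, (cCoef i n * β / α) ^ (τ + 1) *
          ((((n : ℝ) + 1) * u - i) * (u ^ (a - 1) * (1 - u) ^ (b - 1))) := by
        rw [← logLogisticQuantile_image_Ioo hα hβ,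
          integral_image_eq_integral_deriv_smul_of_monotoneOn measurableSet_Ioo
            (fun u hu => (hasDerivAt_logLogisticQuantile hβ.ne' hu).hasDerivWithinAt)
            (strictMonoOn_logLogisticQuantile hα hβ).monotoneOn]
        refine setIntegral_congr_fun measurableSet_Ioo fun u hu => ?_
        rw [smul_eq_mul, logLogisticQuantile_deriv_mul_score_mul_fOrd_rpow hα hβ τ hu, mul_assoc]
    _ = _ := by
        rw [integral_const_mul, integral_Ioo_linear_mul_Beta_integrand ha hb, hmean, Beta_comm,
          mul_div_assoc, Real.mul_rpow (cCoef_nonneg i n) (div_pos hβ hα).le]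
        ring

theorem xi_tau_alpha (α β τ : ℝ) (hα : 0 < α) (hβ : 0 < β) (hτ : 0 ≤ τ)
    (n i : ℕ) (hi1 : 1 ≤ i) (hin : i ≤ n)
    (hpos : 0 < (i : ℝ) * β * τ + i * β - τ) :
    (∫ x in Ioi (0:ℝ), scoreAlpha α β n i x * (fOrd α β n i x) ^ (τ + 1))
      = (β/α) ^ (τ + 1) * cCoef i n ^ (τ + 1) *
          Beta ((((n : ℝ) - i + 1) * β * τ + ((n : ℝ) - i + 1) * β + τ) / β)
               (((i : ℝ) * β * τ + i * β - τ) / β)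
          * (-τ / (β + τ * β)) :=
  xi_tau_alpha_general α β τ hα hβ hτ n i hin hpos
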